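/- arXiv:2204.04281 — 3 statements merged into one kernel-verified Lean document; each statement's English description precedes it below -/
import Mathlib

section
/- (Lemma: Möbius-type bound for sums over distinct indices). Let u^(1), u^(2), …, u^(k) be k vectors in ℝ^N. Then | ∑_{ℓ_1,…,ℓ_k ∈ [N], ℓ_i ≠ ℓ_j for all i ≠ j} ∏_{i=1}^k u^(i)_{ℓ_i} | ≤ k^{2k} · max( √N · U_∞, min( Ū, N · U_∞ ) )^k, where Ū = max_{i ∈ [k]} | ∑_{j=1}^N u^(i)_j | and U_∞ = max_{i ∈ [k]} ‖u^(i)‖_∞. -/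
open Filter
open scoped ENNReal NNReal Topology

noncomputable section
attribute [local instance] Classical.propDecidable

/-!
Write `S(v₀, …, v_k)` for the sum over injective `ℓ` of `∏ vᵢ(ℓᵢ)`. Choosing `ℓ₀ = b` freely and
subtracting the collisions `b = ℓᵢ` gives the recursion
`S(v₀, …, v_k) = (∑_b v₀ b) · S(v₁, …, v_k) - ∑ᵢ S(v₁, …, vᵢ · v₀, …, v_k)`.
The vectors `v` with `√N · ‖v‖_∞ ≤ c` and `|∑ v| ≤ c` are closed under pointwise products
(with constant `c · d`), so by induction `|S| ≤ k! · ∏ cᵢ`. Each `u⁽ⁱ⁾` satisfies both bounds with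
`c = max(√N · U∞, min(Ū, N · U∞))`, and `k! ≤ k^(2k)`.
-/

open Finset
open scoped Nat

variable {ι : Type*} [Fintype ι]

def IsMobiusBounded (v : ι → ℝ) (c : ℝ) : Prop :=
  (∀ j, √(Fintype.card ι) * |v j| ≤ c) ∧ |∑ j, v j| ≤ c

namespace IsMobiusBounded

variable {v w : ι → ℝ} {c d : ℝ}

lemma nonneg (hv : IsMobiusBounded v c) : 0 ≤ c :=
  (abs_nonneg _).trans hv.2

lemma mul (hv : IsMobiusBounded v c) (hw : IsMobiusBounded w d) :
    IsMobiusBounded (v * w) (c * d) := by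
  have hprod : ∀ j, Fintype.card ι * (|v j| * |w j|) ≤ c * d := fun j => by
    calc (Fintype.card ι : ℝ) * (|v j| * |w j|)
        = (√(Fintype.card ι) * |v j|) * (√(Fintype.card ι) * |w j|) := by
          rw [mul_mul_mul_comm, Real.mul_self_sqrt (Nat.cast_nonneg _)]
      _ ≤ c * d := mul_le_mul (hv.1 j) (hw.1 j) (by positivity) hv.nonneg
  refine ⟨fun j => ?_, ?_⟩
  · have hN : (1 : ℝ) ≤ √(Fintype.card ι) :=
      Real.one_le_sqrt.mpr (by exact_mod_cast Fintype.card_pos_iff.mpr ⟨j⟩)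
    calc √(Fintype.card ι) * |(v * w) j| = (√(Fintype.card ι) * |v j|) * |w j| := by
          rw [Pi.mul_apply, abs_mul, mul_assoc]
      _ ≤ c * (√(Fintype.card ι) * |w j|) :=
          mul_le_mul (hv.1 j) (le_mul_of_one_le_left (abs_nonneg _) hN) (abs_nonneg _) hv.nonneg
      _ ≤ c * d := mul_le_mul_of_nonneg_left (hw.1 j) hv.nonneg
  · rcases isEmpty_or_nonempty ι with hι | ⟨⟨j₀⟩⟩
    · simpa using mul_nonneg hv.nonneg hw.nonneg
    have hN : (0 : ℝ) < Fintype.card ι := by exact_mod_cast Fintype.card_pos_iff.mpr ⟨j₀⟩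
    calc |∑ j, (v * w) j| ≤ ∑ j, |v j| * |w j| := by
          simpa only [Pi.mul_apply, abs_mul] using abs_sum_le_sum_abs (fun j => v j * w j) univ
      _ ≤ ∑ _j : ι, c * d / Fintype.card ι :=
          sum_le_sum fun j _ => (le_div_iff₀' hN).mpr (hprod j)
      _ = c * d := by rw [sum_const, card_univ, nsmul_eq_mul, mul_div_cancel₀ _ hN.ne']

lemma of_abs_le {U Ū : ℝ} (hU : ∀ j, |v j| ≤ U) (hŪ : |∑ j, v j| ≤ Ū) :
    IsMobiusBounded v (max (√(Fintype.card ι) * U) (min Ū (Fintype.card ι * U))) := by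
  refine ⟨fun j => le_max_of_le_left (mul_le_mul_of_nonneg_left (hU j) (Real.sqrt_nonneg _)),
    le_max_of_le_right (le_min hŪ ?_)⟩
  calc |∑ j, v j| ≤ ∑ j, |v j| := abs_sum_le_sum_abs _ _
    _ ≤ ∑ _j : ι, U := sum_le_sum fun j _ => hU j
    _ = Fintype.card ι * U := by rw [sum_const, card_univ, nsmul_eq_mul]

end IsMobiusBounded

lemma Fintype.prod_update_mul_self {α M : Type*} [Fintype α] [DecidableEq α] [CommMonoid M]
    (f : α → M) (a : α) (x : M) : ∏ i, Function.update f a (f a * x) i = (∏ i, f i) * x := by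
  rw [prod_update_of_mem (mem_univ a), prod_eq_mul_prod_sdiff_singleton_of_mem (mem_univ a),
    mul_right_comm]

lemma Function.Embedding.sum_subtype_notMem_range {α M : Type*} [Fintype α] [AddCommGroup M]
    (e : α ↪ ι) (f : ι → M) :
    ∑ b : {b // b ∉ Set.range e}, f b = ∑ b, f b - ∑ a, f (e a) := by
  have hrange : ∑ b : {b // b ∈ Set.range e}, f b = ∑ a, f (e a) :=
    Fintype.sum_equiv (Equiv.ofInjective e e.injective).symm _ _ fun b =>
      congrArg f (Equiv.apply_ofInjective_symm e.injective b).symm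
  rw [eq_sub_iff_add_eq, ← hrange, add_comm]
  convert Fintype.sum_subtype_add_sum_subtype (· ∈ Set.range e) f

def distinctSum {k : ℕ} (v : Fin k → ι → ℝ) : ℝ :=
  ∑ e : Fin k ↪ ι, ∏ i, v i (e i)

lemma sum_filter_injective_eq_distinctSum {k : ℕ}
    [DecidablePred (Function.Injective : (Fin k → ι) → Prop)] (v : Fin k → ι → ℝ) :
    ∑ ℓ ∈ univ.filter (fun ℓ : Fin k → ι => Function.Injective ℓ), ∏ i, v i (ℓ i) =
      distinctSum v := by
  rw [sum_subtype _ fun ℓ => mem_filter_univ ℓ]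
  exact Fintype.sum_equiv (Equiv.subtypeInjectiveEquivEmbedding (Fin k) ι) _ _ fun _ => rfl

lemma distinctSum_succ {k : ℕ} (v : Fin (k + 1) → ι → ℝ) :
    distinctSum v =
      ∑ e : Fin k ↪ ι, (∏ i, v i.succ (e i)) * (∑ b, v 0 b - ∑ i, v 0 (e i)) := by
  rw [distinctSum, ← (Equiv.embeddingFinSucc k ι).symm.sum_comp, Fintype.sum_sigma]
  refine Fintype.sum_congr _ _ fun e => ?_
  simp only [Equiv.coe_embeddingFinSucc_symm, Fin.prod_univ_succ, Fin.cons_zero, Fin.cons_succ]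
  rw [← e.sum_subtype_notMem_range, mul_sum]
  exact Fintype.sum_congr _ _ fun b => mul_comm _ _

lemma distinctSum_succ_eq_sub {k : ℕ} (v : Fin (k + 1) → ι → ℝ) :
    distinctSum v = (∑ b, v 0 b) * distinctSum (Fin.tail v) -
      ∑ i₀, distinctSum (Function.update (Fin.tail v) i₀ (Fin.tail v i₀ * v 0)) := by
  have merge : ∀ (i₀ : Fin k) (e : Fin k ↪ ι),
      ∏ i, Function.update (Fin.tail v) i₀ (Fin.tail v i₀ * v 0) i (e i) =
        (∏ i, v i.succ (e i)) * v 0 (e i₀) := fun i₀ e => by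
    simp only [Function.apply_update (fun i (w : ι → ℝ) => w (e i)), Pi.mul_apply]
    exact Fintype.prod_update_mul_self (fun i => v i.succ (e i)) i₀ _
  rw [distinctSum_succ]
  simp only [distinctSum, merge, mul_sub, sum_sub_distrib]
  congr 1
  · rw [mul_sum]
    exact sum_congr rfl fun e _ => mul_comm _ _
  · rw [sum_comm]
    simp only [mul_sum]

theorem abs_distinctSum_le {k : ℕ} (v : Fin k → ι → ℝ) (c : Fin k → ℝ)
    (hv : ∀ i, IsMobiusBounded (v i) (c i)) : |distinctSum v| ≤ k ! * ∏ i, c i := by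
  induction k with
  | zero => simp [distinctSum]
  | succ k ih =>
    have merged : ∀ i₀ : Fin k,
        |distinctSum (Function.update (Fin.tail v) i₀ (Fin.tail v i₀ * v 0))| ≤
          k ! * ((∏ i : Fin k, c i.succ) * c 0) := fun i₀ => by
      rw [← Fintype.prod_update_mul_self (fun i : Fin k => c i.succ) i₀ (c 0)]
      refine ih _ _ fun i => ?_
      rcases eq_or_ne i i₀ with rfl | hi
      · rw [Function.update_self, Function.update_self]
        exact (hv i.succ).mul (hv 0)
      · rw [Function.update_of_ne hi, Function.update_of_ne hi]
        exact hv i.succ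
    calc |distinctSum v|
        ≤ |∑ b, v 0 b| * |distinctSum (Fin.tail v)| +
            ∑ i₀, |distinctSum (Function.update (Fin.tail v) i₀ (Fin.tail v i₀ * v 0))| := by
          rw [distinctSum_succ_eq_sub, ← abs_mul]
          exact (abs_sub _ _).trans (add_le_add_right (abs_sum_le_sum_abs _ _) _)
      _ ≤ c 0 * (k ! * ∏ i : Fin k, c i.succ) +
            ∑ _i₀ : Fin k, k ! * ((∏ i : Fin k, c i.succ) * c 0) := by
          gcongr with i₀
          · exact (hv 0).nonneg
          · exact (hv 0).2
          · exact ih _ _ fun i => hv i.succ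
          · exact merged i₀
      _ = (k + 1)! * ∏ i, c i := by
          rw [sum_const, card_univ, Fintype.card_fin, nsmul_eq_mul, Fin.prod_univ_succ,
            Nat.factorial_succ]
          push_cast
          ring

/-- **Lemma (Möbius-type bound for sums over tuples of distinct indices).**
For vectors `u^(1), …, u^(k)` in `ℝ^N`,
`|∑_{ℓ distinct} ∏_i u^(i)_{ℓ_i}| ≤ k^{2k} · max(√N · U∞, min(Ū, N · U∞))^k`,
where `Ū = max_i |∑_j u^(i)_j|` and `U∞ = max_i ‖u^(i)‖_∞`. -/
theorem mobius_distinct_indices_bound (N k : ℕ) (u : Fin k → Fin N → ℝ) :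
    |∑ ℓ ∈ Finset.univ.filter (fun ℓ : Fin k → Fin N => Function.Injective ℓ),
        ∏ i : Fin k, u i (ℓ i)| ≤
      (k : ℝ) ^ (2 * k) *
        max (Real.sqrt N * (⨆ i : Fin k, ⨆ j : Fin N, |u i j|))
            (min (⨆ i : Fin k, |∑ j : Fin N, u i j|)
                 ((N : ℝ) * (⨆ i : Fin k, ⨆ j : Fin N, |u i j|))) ^ k := by
  set U := ⨆ i : Fin k, ⨆ j : Fin N, |u i j|
  set M := max (√N * U) (min (⨆ i : Fin k, |∑ j : Fin N, u i j|) (N * U))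
  have hU : ∀ i j, |u i j| ≤ U := fun i j =>
    (le_ciSup (Finite.bddAbove_range fun j => |u i j|) j).trans
      (le_ciSup (Finite.bddAbove_range fun i => ⨆ j, |u i j|) i)
  have hM : ∀ i, IsMobiusBounded (u i) M := fun i => by
    simpa only [Fintype.card_fin] using IsMobiusBounded.of_abs_le (hU i)
      (le_ciSup (Finite.bddAbove_range fun i => |∑ j, u i j|) i)
  have hM₀ : 0 ≤ M :=
    le_max_of_le_left (mul_nonneg (Real.sqrt_nonneg _)
      (Real.iSup_nonneg fun i => Real.iSup_nonneg fun j => abs_nonneg _))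
  have hfact : (k ! : ℝ) ≤ (k : ℝ) ^ (2 * k) := by
    rw [mul_comm, pow_mul]
    exact_mod_cast (Nat.factorial_le_pow k).trans (Nat.le_self_pow two_ne_zero _)
  calc _ = |distinctSum u| := by rw [sum_filter_injective_eq_distinctSum]
    _ ≤ k ! * ∏ _i : Fin k, M := abs_distinctSum_le u _ hM
    _ ≤ (k : ℝ) ^ (2 * k) * M ^ k := by
      rw [prod_const, card_univ, Fintype.card_fin]
      gcongr

end
end

section
/- (Proposition: decomposition of relevant configurations into simple configurations). Let (F, π) be a relevant configuration. Then there exist L ∈ ℕ (independent of N), simple configurations (F_1, π_1),…,(F_L, π_L), and signs a ∈ {−1, 1}^L such that ∑_{ℓ ∈ C(π)} γ(Ψ; F, ℓ) = ∑_{i=1}^L a_i ∑_{ℓ ∈ C(π_i)} γ(Ψ; F_i, ℓ) for every Ψ ∈ ℝ^{N×N} with (ΨΨᵀ)_{jj} = 1 for all j ∈ [N]. Furthermore, if (F, π) has exactly one non-trivial root (|R(F)∖R₀(F)| = 1), then every (F_i, π_i) also has exactly one non-trivial root. -/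
open Filter Matrix
open scoped ENNReal NNReal Topology

noncomputable section
attribute [local instance] Classical.propDecidable

/-- A decorated forest `F = (V, E, h, p, q)` (Definition 5.1 of the paper).
Vertices are `{0, …, n-1}`; `parent v = some u` encodes the directed edge `u → v`.
The decreasing height function along edges guarantees that the directed graph
`(V, E)` is a forest. -/
structure DecForest where
  n : ℕ
  parent : Fin n → Option (Fin n)
  height : Fin n → ℕ
  pw : Fin n → ℕ
  qw : Fin n → ℕ
  height_parent : ∀ v u, parent v = some u → height v + 1 = height u
  pw_pos : ∀ v, parent v ≠ none → 1 ≤ pw v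
  height_zero_no_children : ∀ u, height u = 0 → ∀ v, parent v ≠ some u
  childless_qw : ∀ u, (∀ v, parent v ≠ some u) → 1 ≤ qw u → height u = 0
  conservation : ∀ u : Fin n, (∃ v, parent v = some u) →
    qw u = ∑ v ∈ Finset.univ.filter (fun v => parent v = some u), pw v

namespace DecForest

variable (F : DecForest)

/-- `v` is a root of the forest. -/
def isRoot (v : Fin F.n) : Prop := F.parent v = none

/-- The set of children of a vertex. -/
def children (u : Fin F.n) : Finset (Fin F.n) :=
  Finset.univ.filter fun v => F.parent v = some u

/-- The number of children of a vertex. -/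
def childCount (u : Fin F.n) : ℕ := (F.children u).card

/-- `v` is a leaf: a non-root vertex without children. -/
def isLeaf (v : Fin F.n) : Prop := F.parent v ≠ none ∧ F.childCount v = 0

/-- `v` is a trivial root: a root without children. -/
def isTrivialRoot (v : Fin F.n) : Prop := F.parent v = none ∧ F.childCount v = 0

/-- Two (non-root) vertices are siblings if they are distinct and share a parent. -/
def sibling (u v : Fin F.n) : Prop :=
  u ≠ v ∧ ∃ w, F.parent u = some w ∧ F.parent v = some w

/-- The number of non-trivial roots `|R(F)| - |R₀(F)|`. -/
def nontrivialRootCount : ℕ :=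
  (Finset.univ.filter fun v => F.isRoot v ∧ F.childCount v ≠ 0).card

end DecForest

/-- The polynomial `γ(Ψ; F, ℓ) = N⁻¹ ∏_{u→v ∈ E} Ψ_{ℓ_u ℓ_v}^{p_v}`. -/
def gammaPoly {N : ℕ} (F : DecForest) (Ψ : Matrix (Fin N) (Fin N) ℝ)
    (ℓ : Fin F.n → Fin N) : ℝ :=
  (N : ℝ)⁻¹ * ∏ v : Fin F.n, (F.parent v).elim 1 fun u => Ψ (ℓ u) (ℓ v) ^ F.pw v

/-- A coloring `ℓ` is consistent with the partition whose blocks are the fibers of `b`. -/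
def Consistent {n N : ℕ} (b : Fin n → Fin n) (ℓ : Fin n → Fin N) : Prop :=
  ∀ u v, ℓ u = ℓ v ↔ b u = b v

/-- `Γ(Ψ; F, π) = ∑_{ℓ ∈ C(π)} γ(Ψ; F, ℓ)`, the partition `π` being encoded by the
fibers of the function `b`. -/
def GammaSum {N : ℕ} (F : DecForest) (b : Fin F.n → Fin F.n)
    (Ψ : Matrix (Fin N) (Fin N) ℝ) : ℝ :=
  ∑ ℓ ∈ Finset.univ.filter (fun ℓ : Fin F.n → Fin N => Consistent b ℓ), gammaPoly F Ψ ℓ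

/-- The number `|π|` of blocks of the partition encoded by `b`. -/
def numBlocks {n : ℕ} (b : Fin n → Fin n) : ℕ := (Finset.univ.image b).card

/-- The cardinality of the block of `v` in the partition encoded by `b`. -/
def blockCard {n : ℕ} (b : Fin n → Fin n) (v : Fin n) : ℕ :=
  (Finset.univ.filter fun u => b u = b v).card

/-- `v, v'` is a pair of nullifying leaves (with the corresponding pair of nullifying
edges) for the configuration `(F, π)`. -/
def NullifyingPair (F : DecForest) (b : Fin F.n → Fin F.n) (v v' : Fin F.n) : Prop :=
  v ≠ v' ∧ F.isLeaf v ∧ F.isLeaf v' ∧ F.pw v = 1 ∧ F.pw v' = 1 ∧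
    b v = b v' ∧ (∀ u, b u = b v → u = v ∨ u = v') ∧
    ∀ u u', F.parent v = some u → F.parent v' = some u' → b u ≠ b u'

/-- `v, v'` is a removable pair of leaves (with the corresponding removable pair of
edges) for the configuration `(F, π)`. -/
def RemovablePair (F : DecForest) (b : Fin F.n → Fin F.n) (v v' : Fin F.n) : Prop :=
  v ≠ v' ∧ F.isLeaf v ∧ F.isLeaf v' ∧ F.pw v = 1 ∧ F.pw v' = 1 ∧
    b v = b v' ∧ (∀ u, b u = b v → u = v ∨ u = v') ∧
    ∀ u u', F.parent v = some u → F.parent v' = some u' → b u = b u'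

/-- The number `|L₀(F, π)|` of nullifying leaves of the configuration. -/
def nullLeafCount (F : DecForest) (b : Fin F.n → Fin F.n) : ℕ :=
  (Finset.univ.filter fun v => ∃ v', NullifyingPair F b v v').card

/-- The exponent `η(F, π) = |L₀(F,π)|/4 + 1 - |π| + (1/2) ∑_{v ∉ R(F)} p_v`. -/
def etaExponent (F : DecForest) (b : Fin F.n → Fin F.n) : ℝ :=
  (nullLeafCount F b : ℝ) / 4 + 1 - (numBlocks b : ℝ) +
    (1 / 2 : ℝ) * ∑ v ∈ Finset.univ.filter (fun v => F.parent v ≠ none), (F.pw v : ℝ)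

/-- The contribution of a vertex to the parity count of its block (also the exponent of
its sign variable): `q_u` for non-trivial roots, `p_v` for leaves, `p_u + q_u` for
internal non-root vertices, `0` for trivial roots. -/
def vertexContrib (F : DecForest) (v : Fin F.n) : ℕ :=
  if F.parent v = none then (if F.childCount v = 0 then 0 else F.qw v)
  else if F.childCount v = 0 then F.pw v
  else F.pw v + F.qw v

/-- The parity rule/property: the total contribution of every block is even. -/
def ParityProp (F : DecForest) (b : Fin F.n → Fin F.n) : Prop :=
  ∀ v : Fin F.n,
    Even (∑ u ∈ Finset.univ.filter (fun u => b u = b v), vertexContrib F u)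

/-- Relevant configurations (Definition 5.6 of the paper). -/
structure RelevantConfig (F : DecForest) (b : Fin F.n → Fin F.n) : Prop where
  root_rule : ∀ u v, F.isRoot u → F.isRoot v → b u = b v
  sibling_rule : ∀ u v, F.sibling u v → b u ≠ b v
  forbidden_weights : ∀ v, ¬F.isRoot v →
    ¬(F.pw v = 1 ∧ F.qw v = 1) ∧ ¬(F.pw v = 2 ∧ F.qw v = 0)
  leaf_rule : ∀ v, F.isLeaf v → 1 ≤ F.qw v → blockCard b v ≠ 1
  trivial_root_rule : ∀ v, F.isTrivialRoot v → 1 ≤ F.qw v → blockCard b v ≠ 1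
  parity_rule : ParityProp F b

/-- Simple configurations (Definition 5.9 of the paper). -/
structure SimpleConfig (F : DecForest) (b : Fin F.n → Fin F.n) : Prop where
  root_prop : ∀ u v, F.isRoot u → F.isRoot v → b u = b v
  singleton_leaf : ∀ v, F.isLeaf v → blockCard b v = 1 → 4 ≤ F.pw v
  paired_leaf : ∀ v v', v ≠ v' → F.isLeaf v → F.isLeaf v' → F.pw v = 1 → F.pw v' = 1 →
    b v = b v' → (∀ u, b u = b v → u = v ∨ u = v') →
    ∀ u u', F.parent v = some u → F.parent v' = some u' → b u ≠ b u'
  forbidden_weights : ∀ v, ¬F.isRoot v → blockCard b v = 1 →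
    ¬(F.pw v = 1 ∧ F.qw v = 1) ∧ ¬(F.pw v = 2 ∧ F.qw v = 0)
  parity_prop : ParityProp F b

/-- Semi-simple configurations (Definition 7.1 of the paper). -/
structure SemiSimpleConfig (F : DecForest) (b : Fin F.n → Fin F.n) : Prop where
  root_prop : ∀ u v, F.isRoot u → F.isRoot v → b u = b v
  sibling_prop : ∀ u v, F.sibling u v →
    ¬(b u = b v ∧ ∀ w, b w = b u → w = u ∨ w = v)
  singleton_leaf : ∀ v, F.isLeaf v → blockCard b v = 1 → 4 ≤ F.pw v
  forbidden_weights : ∀ v, ¬F.isRoot v → blockCard b v = 1 →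
    ¬(F.pw v = 1 ∧ F.qw v = 1) ∧ ¬(F.pw v = 2 ∧ F.qw v = 0)
  parity_prop : ParityProp F b

end

noncomputable section

/-!
A relevant configuration is semi-simple, and a semi-simple configuration that is not simple has
a removable pair of leaves `v, v'`: `{v, v'}` is a block, `p_v = p_{v'} = 1`, and the parents
`u, u'` lie in a common block (they are distinct by semi-simplicity). Colour `{v, v'}` by an
arbitrary `k` and every other vertex consistently with `π` merged along `{v, v'}` into the root
block. Grouping these colourings by the block whose colour `k` repeats gives
`Γ(F, π) + ∑_t Γ(F, π_t)`, where `π_t` merges `{v, v'}` into the block `t`. Summing over `k`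
first contracts `Ψ_{ℓ_u k} Ψ_{ℓ_{u'} k}` to `(Ψ Ψᵀ)_{ℓ_u ℓ_u} = 1`, which leaves `Γ` of the
forest with the edges into `v, v'` cut. Every configuration in the resulting identity is
again semi-simple and has one block fewer than `(F, π)`, so induction on `|π|` writes
`Γ(F, π)` as a signed sum of simple `Γ`'s; such signed sums are the elements of the additive
subgroup generated by the simple `Γ`'s, viewed as functions of `Ψ`.

Cutting edges into leaves creates no non-trivial root. If `F` has exactly one, then `u` and
`u'` are not both roots, so an edge above one of them survives and the cut forest keeps it.
-/

attribute [local instance] Classical.propDecidable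

section Partition

variable {n : ℕ} {α : Type*} (b : Fin n → Fin n)

/-- For `f = b`, this merges the block of `v` into the block labelled `a`. -/
def updateBlock (v : Fin n) (f : Fin n → α) (a : α) : Fin n → α :=
  fun x => if b x = b v then a else f x

variable {b}

lemma updateBlock_of_eq {v x : Fin n} {f : Fin n → α} {a : α} (h : b x = b v) :
    updateBlock b v f a x = a := if_pos h

lemma updateBlock_of_ne {v x : Fin n} {f : Fin n → α} {a : α} (h : b x ≠ b v) :
    updateBlock b v f a x = f x := if_neg h

lemma updateBlock_self (v : Fin n) : updateBlock b v b (b v) = b := by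
  funext x
  by_cases h : b x = b v <;> simp [updateBlock, h]

lemma updateBlock_congr {v x y : Fin n} {t : Fin n} (h : b x = b y) :
    updateBlock b v b t x = updateBlock b v b t y := by
  simp [updateBlock, h]

lemma numBlocks_updateBlock {v z : Fin n} (hz : b z ≠ b v) :
    numBlocks (updateBlock b v b (b z)) + 1 = numBlocks b := by
  have himage :
      Finset.univ.image (updateBlock b v b (b z)) = (Finset.univ.image b).erase (b v) := by
    ext y
    simp only [Finset.mem_image, Finset.mem_univ, true_and, Finset.mem_erase]
    constructor
    · rintro ⟨x, rfl⟩
      by_cases hx : b x = b v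
      · exact ⟨by rwa [updateBlock_of_eq hx], z, (updateBlock_of_eq hx).symm⟩
      · exact ⟨by rwa [updateBlock_of_ne hx], x, (updateBlock_of_ne hx).symm⟩
    · rintro ⟨hyv, x, rfl⟩
      exact ⟨x, updateBlock_of_ne hyv⟩
  rw [numBlocks, himage, Finset.card_erase_add_one (Finset.mem_image_of_mem b (Finset.mem_univ v)),
    numBlocks]

lemma blockCard_eq_one_of_coarser {b' : Fin n → Fin n} (hb : ∀ x y, b x = b y → b' x = b' y)
    {x : Fin n} (h : blockCard b' x = 1) : blockCard b x = 1 := by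
  refine le_antisymm ?_ (Finset.card_pos.mpr ⟨x, by simp⟩)
  exact h ▸ Finset.card_le_card fun y => by simpa using hb y x

lemma eq_of_blockCard_eq_one {x y : Fin n} (h : blockCard b x = 1) (hy : b y = b x) : y = x :=
  Finset.card_le_one.mp h.le y (by simpa using hy) x (by simp)

lemma pairBlock_of_updateBlock {v v' z w w' : Fin n} (hvv' : v ≠ v') (hbv' : b v' = b v)
    (hz : b z ≠ b v)
    (h : updateBlock b v b (b z) w = updateBlock b v b (b z) w' ∧
      ∀ x, updateBlock b v b (b z) x = updateBlock b v b (b z) w → x = w ∨ x = w') :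
    b w = b w' ∧ ∀ x, b x = b w → x = w ∨ x = w' := by
  obtain ⟨hww', hpair⟩ := h
  by_cases hw : updateBlock b v b (b z) w = b z
  · -- the merged block contains the three distinct vertices `v`, `v'` and `z`
    have hmem : ∀ x, b x = b v ∨ b x = b z → x = w ∨ x = w' := fun x hx => hpair x <| by
      rw [hw]; rcases hx with hx | hx
      exacts [updateBlock_of_eq hx, (updateBlock_congr hx).trans (updateBlock_of_ne hz)]
    have hzv' : z ≠ v' := fun h => hz (h ▸ hbv')
    have hzv : z ≠ v := fun h => hz (h ▸ rfl)
    rcases hmem v (Or.inl rfl) with rfl | rfl <;> rcases hmem v' (Or.inl hbv') with rfl | rfl <;>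
      rcases hmem z (Or.inr rfl) with rfl | rfl <;> simp_all
  · have hnot : ∀ {x}, updateBlock b v b (b z) x = updateBlock b v b (b z) w → b x ≠ b v :=
      fun hx hxv => hw (hx ▸ updateBlock_of_eq hxv)
    have hwv := hnot rfl
    have hw'v := hnot hww'.symm
    refine ⟨?_, fun x hx => hpair x ?_⟩
    · rwa [updateBlock_of_ne hwv, updateBlock_of_ne hw'v] at hww'
    · rw [updateBlock_of_ne hwv, updateBlock_of_ne (hx ▸ hwv), hx]

end Partition

section Colorings

variable {n N : ℕ} {α : Type*} {b : Fin n → Fin n} {v : Fin n}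

lemma updateBlock_updateBlock (f : Fin n → α) (a c : α) :
    updateBlock b v (updateBlock b v f a) c = updateBlock b v f c := by
  funext x
  by_cases h : b x = b v <;> simp [updateBlock, h]

lemma updateBlock_eq_self {f : Fin n → α} {a : α} (h : ∀ x, b x = b v → f x = a) :
    updateBlock b v f a = f := by
  funext x
  by_cases hx : b x = b v
  · rw [updateBlock_of_eq hx, h x hx]
  · rw [updateBlock_of_ne hx]

lemma consistent_updateBlock_iff {t : Fin n} {ℓ : Fin n → Fin N} :
    Consistent (updateBlock b v b t) ℓ ↔
      (∀ x y, b x ≠ b v → b y ≠ b v → (ℓ x = ℓ y ↔ b x = b y)) ∧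
      (∀ x, b x = b v → ℓ x = ℓ v) ∧
      ∀ z, b z ≠ b v → (ℓ v = ℓ z ↔ t = b z) := by
  constructor
  · intro h
    refine ⟨fun x y hx hy => ?_, fun x hx => ?_, fun z hz => ?_⟩
    · rw [h, updateBlock_of_ne hx, updateBlock_of_ne hy]
    · rw [h, updateBlock_of_eq hx, updateBlock_of_eq rfl]
    · rw [h, updateBlock_of_eq rfl, updateBlock_of_ne hz]
  · rintro ⟨hoff, hconst, hv⟩ x y
    by_cases hx : b x = b v <;> by_cases hy : b y = b v <;>
      simp only [updateBlock_of_eq, updateBlock_of_ne, hx, hy, hconst x, hconst y, ne_eq,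
        not_false_eq_true, hv, hoff]
    · rw [eq_comm, hv x hx, eq_comm]

lemma eq_of_consistent_updateBlock {t t' : Fin n} (ht : t ∈ Finset.univ.image b)
    (ht' : t' ∈ Finset.univ.image b) {ℓ : Fin n → Fin N}
    (h : Consistent (updateBlock b v b t) ℓ) (h' : Consistent (updateBlock b v b t') ℓ) :
    t = t' := by
  have hiff : ∀ z, b z ≠ b v → (t = b z ↔ t' = b z) := fun z hz =>
    ((consistent_updateBlock_iff.mp h).2.2 z hz).symm.trans
      ((consistent_updateBlock_iff.mp h').2.2 z hz)
  obtain ⟨w, -, rfl⟩ := Finset.mem_image.mp ht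
  obtain ⟨w', -, rfl⟩ := Finset.mem_image.mp ht'
  by_cases hw : b w = b v
  · by_cases hw' : b w' = b v
    · exact hw.trans hw'.symm
    · exact (hiff w' hw').mpr rfl
  · exact ((hiff w hw).mp rfl).symm

variable {r : Fin n}

lemma exists_consistent_updateBlock {m : Fin n → Fin N}
    (hm : Consistent (updateBlock b v b (b r)) m) (k : Fin N) :
    ∃ t ∈ Finset.univ.image b, Consistent (updateBlock b v b t) (updateBlock b v m k) := by
  obtain ⟨hoff, -, -⟩ := consistent_updateBlock_iff.mp hm
  have hoff' : ∀ x y, b x ≠ b v → b y ≠ b v →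
      (updateBlock b v m k x = updateBlock b v m k y ↔ b x = b y) := fun x y hx hy => by
    rw [updateBlock_of_ne hx, updateBlock_of_ne hy, hoff x y hx hy]
  have hconst : ∀ x, b x = b v → updateBlock b v m k x = updateBlock b v m k v := fun x hx => by
    rw [updateBlock_of_eq hx, updateBlock_of_eq rfl]
  by_cases hk : ∃ z, b z ≠ b v ∧ m z = k
  · obtain ⟨z, hz, rfl⟩ := hk
    refine ⟨b z, by simp, consistent_updateBlock_iff.mpr ⟨hoff', hconst, fun y hy => ?_⟩⟩
    rw [updateBlock_of_eq rfl, updateBlock_of_ne hy, hoff z y hz hy]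
  · push Not at hk
    refine ⟨b v, by simp, consistent_updateBlock_iff.mpr ⟨hoff', hconst, fun y hy => ?_⟩⟩
    rw [updateBlock_of_eq rfl, updateBlock_of_ne hy]
    exact iff_of_false (hk y hy).symm (Ne.symm hy)

lemma consistent_updateBlock_of_consistent {t : Fin n} {ℓ : Fin n → Fin N}
    (h : Consistent (updateBlock b v b t) ℓ) (hr : b r ≠ b v) :
    Consistent (updateBlock b v b (b r)) (updateBlock b v ℓ (ℓ r)) := by
  obtain ⟨hoff, -, -⟩ := consistent_updateBlock_iff.mp h
  refine consistent_updateBlock_iff.mpr ⟨fun x y hx hy => ?_, fun x hx => ?_, fun z hz => ?_⟩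
  · rw [updateBlock_of_ne hx, updateBlock_of_ne hy, hoff x y hx hy]
  · rw [updateBlock_of_eq hx, updateBlock_of_eq rfl]
  · rw [updateBlock_of_eq rfl, updateBlock_of_ne hz, hoff r z hr hz]

/-- Recoloring the block of `v` freely in the colorings consistent with its merge into the block
of `r` yields each coloring consistent with some merge of that block exactly once. -/
lemma sum_sum_consistent_updateBlock (hr : b r ≠ b v) (f : (Fin n → Fin N) → ℝ) :
    ∑ t ∈ Finset.univ.image b,
        ∑ ℓ ∈ Finset.univ.filter (Consistent (updateBlock b v b t)), f ℓ =
      ∑ m ∈ Finset.univ.filter (Consistent (updateBlock b v b (b r))),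
        ∑ k : Fin N, f (updateBlock b v m k) := by
  set C : Fin n → Finset (Fin n → Fin N) := fun t =>
    Finset.univ.filter (Consistent (updateBlock b v b t))
  have hdisj : Set.PairwiseDisjoint ↑(Finset.univ.image b) C := fun t ht t' ht' htt' =>
    Finset.disjoint_left.mpr fun ℓ h h' => htt' <|
      eq_of_consistent_updateBlock ht ht' (Finset.mem_filter.mp h).2 (Finset.mem_filter.mp h').2
  have hleft : ∀ p ∈ C (b r) ×ˢ (Finset.univ : Finset (Fin N)),
      updateBlock b v (updateBlock b v p.1 p.2) (updateBlock b v p.1 p.2 r) = p.1 := by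
    intro p hp
    obtain ⟨-, hconst, hroot⟩ := consistent_updateBlock_iff.mp (Finset.mem_filter.mp
      (Finset.mem_product.mp hp).1).2
    rw [updateBlock_updateBlock, updateBlock_of_ne hr]
    exact updateBlock_eq_self fun x hx => (hconst x hx).trans ((hroot r hr).mpr rfl)
  have himage : (Finset.univ.image b).biUnion C =
      (C (b r) ×ˢ Finset.univ).image fun p => updateBlock b v p.1 p.2 := by
    ext ℓ
    simp only [Finset.mem_biUnion, Finset.mem_image, Finset.mem_product, C, Finset.mem_filter,
      Finset.mem_univ, true_and, and_true, Prod.exists]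
    constructor
    · rintro ⟨t, ⟨x, rfl⟩, h⟩
      refine ⟨_, ℓ v, consistent_updateBlock_of_consistent h hr, ?_⟩
      rw [updateBlock_updateBlock]
      exact updateBlock_eq_self (consistent_updateBlock_iff.mp h).2.1
    · rintro ⟨m, k, hm, rfl⟩
      obtain ⟨t, ht, h⟩ := exists_consistent_updateBlock hm k
      obtain ⟨x, -, rfl⟩ := Finset.mem_image.mp ht
      exact ⟨b x, ⟨x, rfl⟩, h⟩
  rw [← Finset.sum_biUnion hdisj, himage, Finset.sum_image, Finset.sum_product]
  intro p hp p' hp' hpp'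
  replace hpp' : updateBlock b v p.1 p.2 = updateBlock b v p'.1 p'.2 := hpp'
  refine Prod.ext ((hleft p hp).symm.trans (by rw [hpp']; exact hleft p' hp')) ?_
  simpa [updateBlock_of_eq] using congrFun hpp' v

end Colorings

namespace DecForest

variable (F : DecForest)

def nontrivialRoots : Finset (Fin F.n) :=
  Finset.univ.filter fun v => F.isRoot v ∧ F.childCount v ≠ 0

variable {F}

lemma mem_nontrivialRoots {x : Fin F.n} :
    x ∈ F.nontrivialRoots ↔ F.isRoot x ∧ F.childCount x ≠ 0 := by
  simp [nontrivialRoots]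

lemma nontrivialRootCount_eq_card : F.nontrivialRootCount = F.nontrivialRoots.card := rfl

lemma mem_children {u v : Fin F.n} : v ∈ F.children u ↔ F.parent v = some u := by
  simp [children]

lemma parent_ne_some_of_childCount_eq_zero {w : Fin F.n} (h : F.childCount w = 0)
    (x : Fin F.n) : F.parent x ≠ some w := fun hx =>
  Finset.card_ne_zero_of_mem (mem_children.mpr hx) h

lemma ne_of_parent_eq_some {u v : Fin F.n} (h : F.parent v = some u) : u ≠ v := by
  rintro rfl
  have := F.height_parent u u h
  omega

lemma nontrivialRoots_nonempty {w z : Fin F.n} (h : F.parent w = some z) :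
    F.nontrivialRoots.Nonempty := by
  cases hz : F.parent z with
  | none =>
    exact ⟨z, mem_nontrivialRoots.mpr ⟨hz, Finset.card_ne_zero_of_mem (mem_children.mpr h)⟩⟩
  | some y => exact nontrivialRoots_nonempty hz
termination_by Finset.univ.sup F.height - F.height w
decreasing_by
  have := F.height_parent w z h
  have := Finset.le_sup (f := F.height) (Finset.mem_univ z)
  omega

lemma qw_eq_pw_add_sum_erase {u v : Fin F.n} (h : F.parent v = some u) :
    F.qw u = F.pw v + ∑ x ∈ (F.children u).erase v, F.pw x := by
  rw [Finset.add_sum_erase _ _ (mem_children.mpr h)]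
  exact F.conservation u ⟨v, h⟩

lemma filter_parent_ite_eq (v y : Fin F.n) :
    Finset.univ.filter (fun x => (if x = v then none else F.parent x) = some y) =
      (F.children y).erase v := by
  ext x
  by_cases hx : x = v <;> simp [hx, children]

-- Reducible, so that `Fin (F.detach v).n` and `Fin F.n` are identified by unification.
@[reducible]
def detach (v : Fin F.n) : DecForest where
  n := F.n
  parent x := if x = v then none else F.parent x
  height := F.height
  pw := F.pw
  qw x := if F.parent v = some x then F.qw x - F.pw v else F.qw x
  height_parent x y h := F.height_parent x y (by split_ifs at h; exact h)
  pw_pos x h := F.pw_pos x (by split_ifs at h; exacts [absurd rfl h, h])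
  height_zero_no_children y hy x := by
    split_ifs
    exacts [nofun, F.height_zero_no_children y hy x]
  childless_qw y hy hq := by
    have hchildren : (F.children y).erase v = ∅ := by
      rw [← filter_parent_ite_eq]
      exact Finset.filter_false_of_mem fun x _ => hy x
    split_ifs at hq with hv
    · have := qw_eq_pw_add_sum_erase hv
      rw [hchildren, Finset.sum_empty] at this
      omega
    · refine F.childless_qw y (fun x hx => ?_) hq
      by_cases hxv : x = v
      · exact hv (hxv ▸ hx)
      · exact Finset.notMem_empty x
          (hchildren ▸ Finset.mem_erase.mpr ⟨hxv, mem_children.mpr hx⟩)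
  conservation y hy := by
    obtain ⟨x, hx⟩ := hy
    have hxv : x ≠ v := by rintro rfl; simp at hx
    rw [if_neg hxv] at hx
    rw [filter_parent_ite_eq]
    split_ifs with hv
    · have := qw_eq_pw_add_sum_erase hv
      omega
    · rw [Finset.erase_eq_of_notMem (fun h => hv (mem_children.mp h))]
      exact F.conservation y ⟨x, hx⟩

variable {u v : Fin F.n}

lemma parent_detach (x : Fin F.n) :
    (F.detach v).parent x = if x = v then none else F.parent x := rfl

lemma parent_detach_of_ne {x : Fin F.n} (hx : x ≠ v) : (F.detach v).parent x = F.parent x :=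
  if_neg hx

lemma children_detach (y : Fin F.n) : (F.detach v).children y = (F.children y).erase v :=
  filter_parent_ite_eq v y

lemma pw_detach : (F.detach v).pw = F.pw := rfl

lemma qw_detach (x : Fin F.n) :
    (F.detach v).qw x = if F.parent v = some x then F.qw x - F.pw v else F.qw x := rfl

lemma qw_detach_of_ne (hv : F.parent v = some u) {x : Fin F.n} (hx : x ≠ u) :
    (F.detach v).qw x = F.qw x :=
  if_neg fun h => hx (Option.some.inj (hv.symm.trans h)).symm

lemma mem_nontrivialRoots_of_detach (hv : F.childCount v = 0) {x : Fin F.n}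
    (hx : x ∈ (F.detach v).nontrivialRoots) : x ∈ F.nontrivialRoots := by
  obtain ⟨hroot, hcc⟩ := mem_nontrivialRoots.mp hx
  replace hcc : ((F.children x).erase v).card ≠ 0 := by rwa [← children_detach]
  obtain ⟨c, hc⟩ := Finset.card_pos.mp (Nat.pos_of_ne_zero hcc)
  have hxv : x ≠ v := by
    rintro rfl
    exact Finset.card_ne_zero_of_mem (Finset.mem_of_mem_erase hc) hv
  exact mem_nontrivialRoots.mpr ⟨(parent_detach_of_ne hxv).symm.trans hroot,
    Finset.card_ne_zero_of_mem (Finset.mem_of_mem_erase hc)⟩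

lemma childCount_detach_add (hv : F.parent v = some u) (x : Fin F.n) :
    (F.detach v).childCount x + (if x = u then 1 else 0) = F.childCount x := by
  rw [childCount, children_detach]
  split_ifs with hxu
  · exact Finset.card_erase_add_one (mem_children.mpr (hxu ▸ hv))
  · rw [Finset.erase_eq_of_notMem fun h => hxu (Option.some.inj (hv.symm.trans
      (mem_children.mp h))).symm, add_zero]
    rfl

lemma childCount_detach_of_ne (hv : F.parent v = some u) {x : Fin F.n} (hx : x ≠ u) :
    (F.detach v).childCount x = F.childCount x := by
  simpa [hx] using childCount_detach_add hv x

lemma vertexContrib_detach (hv : F.parent v = some u) (x : Fin F.n) :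
    vertexContrib F x = vertexContrib (F.detach v) x + (if x = v then F.pw v else 0) +
      (if x = u then F.pw v else 0) := by
  have huv := ne_of_parent_eq_some hv
  have hcc := childCount_detach_add hv x
  have hqw : (F.detach v).qw x = if x = u then F.qw x - F.pw v else F.qw x := by
    rw [qw_detach]
    exact if_congr ⟨fun h => (Option.some.inj (hv.symm.trans h)).symm, fun h => h ▸ hv⟩
      rfl rfl
  have hqu : x = u →
      F.pw v ≤ F.qw x ∧ ((F.detach v).childCount x = 0 → F.qw x = F.pw v) := by
    rintro rfl
    rw [qw_eq_pw_add_sum_erase hv, childCount, children_detach, Finset.card_eq_zero]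
    exact ⟨Nat.le_add_right _ _, fun h => by rw [h, Finset.sum_empty, add_zero]⟩
  unfold vertexContrib
  rw [parent_detach, hqw, pw_detach]
  by_cases hxv : x = v
  · subst hxv
    simp only [if_true, hv, reduceCtorEq, if_false, huv.symm, add_zero] at hcc ⊢
    split_ifs <;> omega
  · by_cases hxu : x = u
    · obtain ⟨hle, hq⟩ := hqu hxu
      subst hxu
      simp only [hxv, if_true, if_false] at hcc ⊢
      split_ifs <;> omega
    · simp only [hxv, hxu, if_false, add_zero] at hcc ⊢
      rw [hcc]

lemma gammaPoly_detach {N : ℕ} (hv : F.parent v = some u) (Ψ : Matrix (Fin N) (Fin N) ℝ)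
    (ℓ : Fin F.n → Fin N) :
    gammaPoly F Ψ ℓ = Ψ (ℓ u) (ℓ v) ^ F.pw v * gammaPoly (F.detach v) Ψ ℓ := by
  set f : Option (Fin F.n) → Fin F.n → ℝ :=
    fun p x => p.elim 1 fun w => Ψ (ℓ w) (ℓ x) ^ F.pw x
  change (N : ℝ)⁻¹ * ∏ x, f (F.parent x) x =
    Ψ (ℓ u) (ℓ v) ^ F.pw v * ((N : ℝ)⁻¹ * ∏ x, f ((F.detach v).parent x) x)
  rw [← Finset.mul_prod_erase _ _ (Finset.mem_univ v),
    ← Finset.mul_prod_erase _ (fun x => f ((F.detach v).parent x) x) (Finset.mem_univ v)]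
  have hrest : ∏ x ∈ Finset.univ.erase v, f ((F.detach v).parent x) x =
      ∏ x ∈ Finset.univ.erase v, f (F.parent x) x :=
    Finset.prod_congr rfl fun x hx => by rw [parent_detach_of_ne (Finset.ne_of_mem_erase hx)]
  rw [hrest]
  simp only [f, if_true, hv, Option.elim]
  ring

lemma _root_.gammaPoly_congr {N : ℕ} {G : DecForest} (Ψ : Matrix (Fin N) (Fin N) ℝ)
    {ℓ ℓ' : Fin G.n → Fin N}
    (h : ∀ x y, G.parent x = some y → ℓ x = ℓ' x ∧ ℓ y = ℓ' y) :
    gammaPoly G Ψ ℓ = gammaPoly G Ψ ℓ' := by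
  unfold gammaPoly
  congr 1
  refine Finset.prod_congr rfl fun x _ => ?_
  cases hx : G.parent x with
  | none => rfl
  | some y => simp only [Option.elim, (h x y hx).1, (h x y hx).2]

variable {u' v' : Fin F.n}

abbrev detachPair (v v' : Fin F.n) : DecForest := (F.detach v).detach v'

lemma parent_detachPair_of_ne {x : Fin F.n} (hx : x ≠ v) (hx' : x ≠ v') :
    (F.detachPair v v').parent x = F.parent x :=
  (parent_detach_of_ne (F := F.detach v) hx').trans (parent_detach_of_ne hx)

lemma parent_detachPair_ne_some {x : Fin F.n} (hx : x = v ∨ x = v') (y : Fin F.n) :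
    (F.detachPair v v').parent x ≠ some y := by
  rw [parent_detach, parent_detach]
  rcases hx with rfl | rfl <;> simp

lemma parent_detach_of_parent_eq_some (hv' : F.parent v' = some u') (hvv' : v ≠ v') :
    (F.detach v).parent v' = some u' :=
  (parent_detach_of_ne hvv'.symm).trans hv'

lemma vertexContrib_detachPair (hv : F.parent v = some u) (hv' : F.parent v' = some u')
    (hvv' : v ≠ v') (x : Fin F.n) :
    vertexContrib F x = vertexContrib (F.detachPair v v') x + (if x = v then F.pw v else 0) +
      (if x = u then F.pw v else 0) + (if x = v' then F.pw v' else 0) +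
      (if x = u' then F.pw v' else 0) := by
  rw [vertexContrib_detach hv x,
    vertexContrib_detach (parent_detach_of_parent_eq_some hv' hvv') x, pw_detach]
  ring

lemma gammaPoly_detachPair {N : ℕ} (hv : F.parent v = some u) (hv' : F.parent v' = some u')
    (hvv' : v ≠ v') (Ψ : Matrix (Fin N) (Fin N) ℝ) (ℓ : Fin F.n → Fin N) :
    gammaPoly F Ψ ℓ = Ψ (ℓ u) (ℓ v) ^ F.pw v * Ψ (ℓ u') (ℓ v') ^ F.pw v' *
      gammaPoly (F.detachPair v v') Ψ ℓ := by
  rw [gammaPoly_detach hv, gammaPoly_detach (parent_detach_of_parent_eq_some hv' hvv'),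
    pw_detach, mul_assoc]

lemma _root_.ParityProp.detachPair {c : Fin F.n → Fin F.n} (hP : ParityProp F c)
    (hv : F.parent v = some u) (hv' : F.parent v' = some u') (hvv' : v ≠ v')
    (hpw : F.pw v = F.pw v') (hcv : c v = c v') (hcu : c u = c u') :
    ParityProp (F.detachPair v v') c := by
  intro (x : Fin F.n)
  change Even (∑ y ∈ Finset.univ.filter fun y : Fin F.n => c y = c x,
    vertexContrib (F.detachPair v v') y)
  have hsum := Finset.sum_congr (s₁ := Finset.univ.filter fun y => c y = c x) rfl
    fun y _ => vertexContrib_detachPair hv hv' hvv' y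
  simp only [Finset.sum_add_distrib, Finset.sum_ite_eq', Finset.mem_filter, Finset.mem_univ,
    true_and, hcv, hcu, hpw] at hsum
  have heven := hP x
  rw [hsum, Nat.even_iff] at heven
  rw [Nat.even_iff]
  split_ifs at heven <;> omega

variable {x : Fin F.n}

lemma isRoot_detachPair (hx : F.isRoot x) : (F.detachPair v v').isRoot x := by
  rw [isRoot, parent_detach, parent_detach]
  split_ifs <;> first | rfl | exact hx

lemma sibling_of_sibling_detachPair {y : Fin F.n} (h : (F.detachPair v v').sibling x y) :
    F.sibling x y := by
  obtain ⟨hxy, w, hx, hy⟩ := h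
  have hne : ∀ {x}, (F.detachPair v v').parent x = some w → x ≠ v ∧ x ≠ v' := fun h =>
    ⟨fun hx => parent_detachPair_ne_some (v' := v') (Or.inl hx) w h,
      fun hx => parent_detachPair_ne_some (v := v) (Or.inr hx) w h⟩
  exact ⟨hxy, w, (parent_detachPair_of_ne (hne hx).1 (hne hx).2).symm.trans hx,
    (parent_detachPair_of_ne (hne hy).1 (hne hy).2).symm.trans hy⟩

lemma isLeaf_of_isLeaf_detachPair (hv : F.parent v = some u) (hv' : F.parent v' = some u')
    (hvv' : v ≠ v') (hxu : x ≠ u) (hxu' : x ≠ u')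
    (h : (F.detachPair v v').isLeaf x) : F.isLeaf x := by
  have hxv : x ≠ v ∧ x ≠ v' :=
    ⟨fun hx => h.1 (by rw [parent_detach, parent_detach]; simp [hx]),
      fun hx => h.1 (by rw [parent_detach]; simp [hx])⟩
  refine ⟨fun hx => h.1 ((parent_detachPair_of_ne hxv.1 hxv.2).trans hx), ?_⟩
  rw [← childCount_detach_of_ne hv hxu,
    ← childCount_detach_of_ne (parent_detach_of_parent_eq_some hv' hvv') hxu']
  exact h.2

lemma qw_detachPair_of_ne (hv : F.parent v = some u) (hv' : F.parent v' = some u')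
    (hvv' : v ≠ v') (hxu : x ≠ u) (hxu' : x ≠ u') : (F.detachPair v v').qw x = F.qw x :=
  (qw_detach_of_ne (parent_detach_of_parent_eq_some hv' hvv') hxu').trans (qw_detach_of_ne hv hxu)

lemma nontrivialRootCount_detachPair (hv : F.parent v = some u) (hv' : F.parent v' = some u')
    (h : F.nontrivialRootCount = 1) (hcv : F.childCount v = 0)
    (hcv' : F.childCount v' = 0) (huu' : u ≠ u') :
    (F.detachPair v v').nontrivialRootCount = 1 := by
  have hvv' : v ≠ v' := by rintro rfl; exact huu' (Option.some.inj (hv.symm.trans hv'))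
  have hne : ∀ {w z}, F.parent w = some z → z ≠ v ∧ z ≠ v' := fun hw =>
    ⟨fun h => parent_ne_some_of_childCount_eq_zero hcv _ (h ▸ hw),
      fun h => parent_ne_some_of_childCount_eq_zero hcv' _ (h ▸ hw)⟩
  have hsub : (F.detachPair v v').nontrivialRoots ⊆ F.nontrivialRoots := fun x hx =>
    mem_nontrivialRoots_of_detach hcv <| mem_nontrivialRoots_of_detach
      ((childCount_detach_of_ne hv (hne hv).2.symm).trans hcv') hx
  have hedge : ∃ w z, (F.detachPair v v').parent w = some z := by
    by_contra! hno
    -- otherwise `u` and `u'` are two distinct non-trivial roots of `F`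
    have hroot : ∀ {w z}, F.parent w = some z → z ∈ F.nontrivialRoots := fun hw =>
      mem_nontrivialRoots.mpr ⟨Option.eq_none_iff_forall_ne_some.mpr fun y hy =>
        hno _ y ((parent_detachPair_of_ne (hne hw).1 (hne hw).2).trans hy),
        Finset.card_ne_zero_of_mem (mem_children.mpr hw)⟩
    have := Finset.one_lt_card.mpr ⟨u, hroot hv, u', hroot hv', huu'⟩
    rw [← nontrivialRootCount_eq_card] at this
    omega
  obtain ⟨w, z, hwz⟩ := hedge
  obtain ⟨r, hr⟩ := nontrivialRoots_nonempty hwz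
  rw [nontrivialRootCount_eq_card] at h ⊢
  exact le_antisymm (h ▸ Finset.card_le_card hsub) (Finset.card_pos.mpr ⟨r, hr⟩)

end DecForest

section RemovablePair

open DecForest

variable {F : DecForest} {b : Fin F.n → Fin F.n} {u u' v v' : Fin F.n}

lemma RemovablePair.block_ne (hpair : RemovablePair F b v v') {x : Fin F.n} (hx : x ≠ v)
    (hx' : x ≠ v') : b x ≠ b v := by
  obtain ⟨-, -, -, -, -, -, hblock, -⟩ := hpair
  exact fun h => (hblock x h).elim hx hx'

lemma RemovablePair.block_ne_of_parent_eq_some (hpair : RemovablePair F b v v')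
    {x y : Fin F.n} (hy : F.parent y = some x) : b x ≠ b v := by
  have ⟨_, ⟨_, hcv⟩, ⟨_, hcv'⟩, _⟩ := hpair
  exact hpair.block_ne (fun h => parent_ne_some_of_childCount_eq_zero hcv y (h ▸ hy))
    (fun h => parent_ne_some_of_childCount_eq_zero hcv' y (h ▸ hy))

lemma RemovablePair.block_ne_of_isRoot (hpair : RemovablePair F b v v') {r : Fin F.n}
    (hr : F.isRoot r) : b r ≠ b v := by
  have ⟨_, ⟨hv, _⟩, ⟨hv', _⟩, _⟩ := hpair
  exact hpair.block_ne (fun h => hv (h ▸ hr)) (fun h => hv' (h ▸ hr))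

lemma RemovablePair.gammaPoly_updateBlock {N : ℕ} (hpair : RemovablePair F b v v')
    (hv : F.parent v = some u) (hv' : F.parent v' = some u') (Ψ : Matrix (Fin N) (Fin N) ℝ)
    (m : Fin F.n → Fin N) (k : Fin N) :
    gammaPoly F Ψ (updateBlock b v m k) =
      Ψ (m u) k * Ψ (m u') k * gammaPoly (F.detachPair v v') Ψ m := by
  have ⟨hvv', _, _, hpv, hpv', hbv', _, _⟩ := hpair
  have hoff : ∀ {x}, b x ≠ b v → updateBlock b v m k x = m x := updateBlock_of_ne
  rw [gammaPoly_detachPair hv hv' hvv', hpv, hpv', pow_one, pow_one, updateBlock_of_eq rfl,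
    updateBlock_of_eq hbv'.symm, hoff (hpair.block_ne_of_parent_eq_some hv),
    hoff (hpair.block_ne_of_parent_eq_some hv')]
  congr 1
  refine gammaPoly_congr Ψ fun (x y : Fin F.n) hxy => ?_
  have hx : x ≠ v ∧ x ≠ v' :=
    ⟨fun h => parent_detachPair_ne_some (v' := v') (Or.inl h) y hxy,
      fun h => parent_detachPair_ne_some (v := v) (Or.inr h) y hxy⟩
  exact ⟨hoff (hpair.block_ne hx.1 hx.2), hoff (hpair.block_ne_of_parent_eq_some
    ((parent_detachPair_of_ne hx.1 hx.2).symm.trans hxy))⟩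

lemma RemovablePair.sum_gammaPoly_updateBlock {N : ℕ} (hpair : RemovablePair F b v v')
    (hv : F.parent v = some u) (hv' : F.parent v' = some u') (Ψ : Matrix (Fin N) (Fin N) ℝ)
    (m : Fin F.n → Fin N) (hm : m u = m u') (hΨ : (Ψ * Ψᵀ) (m u) (m u) = 1) :
    ∑ k, gammaPoly F Ψ (updateBlock b v m k) = gammaPoly (F.detachPair v v') Ψ m := by
  simp only [Matrix.mul_apply, Matrix.transpose_apply] at hΨ
  simp_rw [hpair.gammaPoly_updateBlock hv hv', ← hm, ← Finset.sum_mul, hΨ, one_mul]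

theorem RemovablePair.gammaSum_add_sum_gammaSum_updateBlock {N : ℕ} {r : Fin F.n}
    (hpair : RemovablePair F b v v') (hv : F.parent v = some u) (hv' : F.parent v' = some u')
    (hr : F.isRoot r) (Ψ : Matrix (Fin N) (Fin N) ℝ) (hΨ : ∀ j, (Ψ * Ψᵀ) j j = 1) :
    GammaSum F b Ψ +
        ∑ t ∈ (Finset.univ.image b).erase (b v), GammaSum F (updateBlock b v b t) Ψ =
      GammaSum (F.detachPair v v') (updateBlock b v b (b r)) Ψ := by
  have hrv := hpair.block_ne_of_isRoot hr
  have ⟨_, _, _, _, _, _, _, hbu⟩ := hpair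
  have hparents :
      ∀ m : Fin F.n → Fin N, Consistent (updateBlock b v b (b r)) m → m u = m u' :=
    fun m hm => (hm u u').mpr <| by
      rw [updateBlock_of_ne (hpair.block_ne_of_parent_eq_some hv),
        updateBlock_of_ne (hpair.block_ne_of_parent_eq_some hv'), hbu u u' hv hv']
  calc _ = ∑ t ∈ Finset.univ.image b, GammaSum F (updateBlock b v b t) Ψ := by
        rw [← Finset.add_sum_erase _ _ (Finset.mem_image_of_mem b (Finset.mem_univ v)),
          updateBlock_self]
    _ = ∑ m ∈ Finset.univ.filter (Consistent (updateBlock b v b (b r))),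
          ∑ k, gammaPoly F Ψ (updateBlock b v m k) := sum_sum_consistent_updateBlock hrv _
    _ = _ := Finset.sum_congr rfl fun m hm => hpair.sum_gammaPoly_updateBlock hv hv' Ψ m
          (hparents m (Finset.mem_filter.mp hm).2) (hΨ _)

end RemovablePair

section Configurations

open DecForest

variable {F : DecForest} {b : Fin F.n → Fin F.n}

lemma ParityProp.mergeBlock (hP : ParityProp F b) (v z : Fin F.n) :
    ParityProp F (updateBlock b v b (b z)) := by
  by_cases hz : b z = b v
  · rwa [hz, updateBlock_self]
  intro x
  by_cases hx : b x = b v ∨ b x = b z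
  · have hblock : Finset.univ.filter (fun y => updateBlock b v b (b z) y =
        updateBlock b v b (b z) x) = Finset.univ.filter (fun y => b y = b v) ∪
        Finset.univ.filter (fun y => b y = b z) := by
      ext y
      simp only [Finset.mem_filter, Finset.mem_univ, true_and, Finset.mem_union, updateBlock]
      grind
    rw [hblock, Finset.sum_union (Finset.disjoint_filter.mpr fun y _ h h' => hz (h'.symm.trans h))]
    exact (hP v).add (hP z)
  · push Not at hx
    have hblock : Finset.univ.filter (fun y => updateBlock b v b (b z) y =
        updateBlock b v b (b z) x) = Finset.univ.filter (fun y => b y = b x) := by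
      ext y
      simp only [Finset.mem_filter, Finset.mem_univ, true_and, updateBlock]
      grind
    rw [hblock]
    exact hP x

lemma filter_eq_singleton_of_blockCard_eq_one {x : Fin F.n} (h : blockCard b x = 1) :
    Finset.univ.filter (fun y => b y = b x) = {x} :=
  Finset.eq_singleton_iff_unique_mem.mpr
    ⟨by simp, fun y hy => eq_of_blockCard_eq_one h (Finset.mem_filter.mp hy).2⟩

lemma RelevantConfig.semiSimpleConfig (h : RelevantConfig F b) : SemiSimpleConfig F b where
  root_prop := h.root_rule
  sibling_prop u v huv hpair := h.sibling_rule u v huv hpair.1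
  singleton_leaf v hv hcard := by
    have hq : F.qw v = 0 := by
      by_contra hq
      exact h.leaf_rule v hv (Nat.one_le_iff_ne_zero.mpr hq) hcard
    have heven := h.parity_rule v
    rw [filter_eq_singleton_of_blockCard_eq_one hcard, Finset.sum_singleton, vertexContrib,
      if_neg hv.1, if_pos hv.2] at heven
    have := F.pw_pos v hv.1
    have := (h.forbidden_weights v hv.1).2
    obtain ⟨k, hk⟩ := heven
    omega
  forbidden_weights v hv _ := h.forbidden_weights v hv
  parity_prop := h.parity_rule

lemma SemiSimpleConfig.simpleConfig (hb : SemiSimpleConfig F b)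
    (h : ∀ v v', ¬RemovablePair F b v v') : SimpleConfig F b where
  root_prop := hb.root_prop
  singleton_leaf := hb.singleton_leaf
  paired_leaf v v' hvv' hv hv' hp hp' hbv hblock u u' hu hu' hbu :=
    h v v' ⟨hvv', hv, hv', hp, hp', hbv, hblock, fun w w' hw hw' => by
      rwa [← Option.some.inj (hu.symm.trans hw), ← Option.some.inj (hu'.symm.trans hw')]⟩
  forbidden_weights := hb.forbidden_weights
  parity_prop := hb.parity_prop

variable {u u' v v' : Fin F.n}

lemma SemiSimpleConfig.parents_ne (hb : SemiSimpleConfig F b) (hpair : RemovablePair F b v v')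
    (hv : F.parent v = some u) (hv' : F.parent v' = some u') : u ≠ u' := by
  obtain ⟨hvv', -, -, -, -, hbv', hblock, -⟩ := hpair
  rintro rfl
  exact hb.sibling_prop v v' ⟨hvv', u, hv, hv'⟩ ⟨hbv', hblock⟩

lemma SemiSimpleConfig.mergeBlock (hb : SemiSimpleConfig F b) (hvv' : v ≠ v')
    (hbv' : b v' = b v) {z : Fin F.n} (hz : b z ≠ b v) :
    SemiSimpleConfig F (updateBlock b v b (b z)) where
  root_prop x y hx hy := updateBlock_congr (hb.root_prop x y hx hy)
  sibling_prop x y hxy h := hb.sibling_prop x y hxy (pairBlock_of_updateBlock hvv' hbv' hz h)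
  singleton_leaf x hx h :=
    hb.singleton_leaf x hx (blockCard_eq_one_of_coarser (fun _ _ => updateBlock_congr) h)
  forbidden_weights x hx h :=
    hb.forbidden_weights x hx (blockCard_eq_one_of_coarser (fun _ _ => updateBlock_congr) h)
  parity_prop := hb.parity_prop.mergeBlock v z

lemma SemiSimpleConfig.detachPair (hb : SemiSimpleConfig F b) (hpair : RemovablePair F b v v')
    (hv : F.parent v = some u) (hv' : F.parent v' = some u') {r : Fin F.n} (hr : F.isRoot r) :
    SemiSimpleConfig (F.detachPair v v') (updateBlock b v b (b r)) := by
  have ⟨hvv', _, _, hpv, hpv', hbv', _, hbu⟩ := hpair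
  have hrv := hpair.block_ne_of_isRoot hr
  have hcoarse : ∀ {x}, blockCard (updateBlock b v b (b r)) x = 1 → blockCard b x = 1 :=
    blockCard_eq_one_of_coarser fun _ _ => updateBlock_congr
  have hsingle : ∀ {x}, blockCard (updateBlock b v b (b r)) x = 1 → x ≠ u ∧ x ≠ u' := by
    have hbu' : updateBlock b v b (b r) u = updateBlock b v b (b r) u' :=
      updateBlock_congr (hbu u u' hv hv')
    refine fun {x} h => ⟨?_, ?_⟩ <;> rintro rfl
    · exact hb.parents_ne hpair hv hv' (eq_of_blockCard_eq_one h hbu'.symm).symm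
    · exact hb.parents_ne hpair hv hv' (eq_of_blockCard_eq_one h hbu')
  have hroot :
      ∀ x : Fin F.n, (F.detachPair v v').isRoot x → updateBlock b v b (b r) x = b r := by
    intro x hx
    by_cases hxv : b x = b v
    · exact updateBlock_of_eq hxv
    · rw [updateBlock_of_ne hxv]
      refine hb.root_prop x r ?_ hr
      rwa [isRoot, ← parent_detachPair_of_ne (v := v) (v' := v') (fun h => hxv (h ▸ rfl))
        (fun h => hxv (h ▸ hbv'.symm))]
  refine ⟨fun x y hx hy => (hroot x hx).trans (hroot y hy).symm, fun x y hxy h => ?_,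
    fun x hx h => ?_, fun x hx h => ?_, ?_⟩
  · exact hb.sibling_prop x y (sibling_of_sibling_detachPair hxy)
      (pairBlock_of_updateBlock hvv' hbv'.symm hrv h)
  · exact hb.singleton_leaf x
      (isLeaf_of_isLeaf_detachPair hv hv' hvv' (hsingle h).1 (hsingle h).2 hx) (hcoarse h)
  · rw [qw_detachPair_of_ne hv hv' hvv' (hsingle h).1 (hsingle h).2]
    exact hb.forbidden_weights x (fun hroot => hx (isRoot_detachPair hroot)) (hcoarse h)
  · exact (hb.parity_prop.mergeBlock v r).detachPair hv hv' hvv' (hpv.trans hpv'.symm)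
      (updateBlock_congr hbv') (updateBlock_congr (hbu u u' hv hv'))

end Configurations

lemma AddSubgroup.exists_signed_sum_of_mem_closure {M : Type*} [AddCommGroup M] {S : Set M}
    {x : M} (hx : x ∈ AddSubgroup.closure S) :
    ∃ (L : ℕ) (s : Fin L → M) (ε : Fin L → ℤ),
      (∀ i, s i ∈ S) ∧ (∀ i, ε i = 1 ∨ ε i = -1) ∧ x = ∑ i, ε i • s i := by
  rw [← AddSubgroup.mem_toAddSubmonoid, AddSubgroup.closure_toAddSubmonoid] at hx
  obtain ⟨l, hl, rfl⟩ := AddSubmonoid.exists_list_of_mem_closure hx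
  have hterm : ∀ i : Fin l.length,
      ∃ (s : M) (ε : ℤ), s ∈ S ∧ (ε = 1 ∨ ε = -1) ∧ l[i.1] = ε • s := by
    intro i
    rcases hl _ (List.getElem_mem i.2) with h | h
    · exact ⟨_, 1, h, Or.inl rfl, (one_smul ℤ _).symm⟩
    · exact ⟨_, -1, h, Or.inr rfl, by rw [neg_one_smul, neg_neg]⟩
  choose s ε hs hε hl using hterm
  refine ⟨l.length, s, ε, hs, hε, ?_⟩
  rw [← Fin.sum_univ_getElem]
  simp only [hl]

section Decomposition

open DecForest

abbrev UnitRowMatrix : Type :=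
  Σ N : ℕ, {Ψ : Matrix (Fin N) (Fin N) ℝ // ∀ j, (Ψ * Ψᵀ) j j = 1}

def gammaSumFun (F : DecForest) (b : Fin F.n → Fin F.n) : UnitRowMatrix → ℝ :=
  fun Ψ => GammaSum F b Ψ.2.1

def simpleGammaSumFuns (rootCond : Prop) : Set (UnitRowMatrix → ℝ) :=
  {f | ∃ (G : DecForest) (c : Fin G.n → Fin G.n), SimpleConfig G c ∧
    (rootCond → G.nontrivialRootCount = 1) ∧ gammaSumFun G c = f}

lemma simpleGammaSumFuns_anti {p q : Prop} (h : p → q) :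
    simpleGammaSumFuns q ⊆ simpleGammaSumFuns p :=
  fun _ ⟨G, c, hs, hq, hf⟩ => ⟨G, c, hs, hq ∘ h, hf⟩

variable {F : DecForest} {b : Fin F.n → Fin F.n}

theorem RemovablePair.gammaSumFun_eq_sub {u u' v v' r : Fin F.n} (hpair : RemovablePair F b v v')
    (hv : F.parent v = some u) (hv' : F.parent v' = some u') (hr : F.isRoot r) :
    gammaSumFun F b = gammaSumFun (F.detachPair v v') (updateBlock b v b (b r)) -
      ∑ t ∈ (Finset.univ.image b).erase (b v), gammaSumFun F (updateBlock b v b t) := by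
  funext Ψ
  rw [Pi.sub_apply, Finset.sum_apply, eq_sub_iff_add_eq]
  exact hpair.gammaSum_add_sum_gammaSum_updateBlock hv hv' hr Ψ.2.1 Ψ.2.2

theorem SemiSimpleConfig.gammaSumFun_mem_closure (hb : SemiSimpleConfig F b) :
    gammaSumFun F b ∈ AddSubgroup.closure (simpleGammaSumFuns (F.nontrivialRootCount = 1)) := by
  induction hk : numBlocks b using Nat.strong_induction_on generalizing F b with
  | _ k ih =>
  by_cases hpair : ∃ v v', RemovablePair F b v v'
  · obtain ⟨v, v', hpair⟩ := hpair
    have ⟨hvv', ⟨hvroot, hcv⟩, ⟨hv'root, hcv'⟩, _, _, hbv', _, _⟩ := hpair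
    obtain ⟨u, hv⟩ := Option.ne_none_iff_exists'.mp hvroot
    obtain ⟨u', hv'⟩ := Option.ne_none_iff_exists'.mp hv'root
    obtain ⟨r, hr⟩ := nontrivialRoots_nonempty hv
    replace hr := (mem_nontrivialRoots.mp hr).1
    have hrv := hpair.block_ne_of_isRoot hr
    rw [hpair.gammaSumFun_eq_sub hv hv' hr]
    refine sub_mem ?_ (sum_mem fun t ht => ?_)
    · refine AddSubgroup.closure_mono (simpleGammaSumFuns_anti fun h =>
          nontrivialRootCount_detachPair hv hv' h hcv hcv' (hb.parents_ne hpair hv hv'))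
        (ih _ ?_ (hb.detachPair hpair hv hv' hr) rfl)
      have := numBlocks_updateBlock hrv
      omega
    · obtain ⟨htv, ht⟩ := Finset.mem_erase.mp ht
      obtain ⟨z, -, rfl⟩ := Finset.mem_image.mp ht
      refine ih _ ?_ (hb.mergeBlock hvv' hbv'.symm htv) rfl
      have := numBlocks_updateBlock htv
      omega
  · push Not at hpair
    exact AddSubgroup.subset_closure ⟨F, b, hb.simpleConfig hpair, id, rfl⟩

end Decomposition

/-- **Proposition (decomposition of relevant configurations into simple configurations).** -/
theorem relevant_config_decomposition
    (F : DecForest) (b : Fin F.n → Fin F.n) (hrel : RelevantConfig F b) :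
    ∃ (L : ℕ) (Fs : Fin L → DecForest)
      (bs : ∀ i : Fin L, Fin (Fs i).n → Fin (Fs i).n) (a : Fin L → ℝ),
      (∀ i, a i = 1 ∨ a i = -1) ∧
      (∀ i, SimpleConfig (Fs i) (bs i)) ∧
      (∀ (N : ℕ) (Ψ : Matrix (Fin N) (Fin N) ℝ),
        (∀ j : Fin N, (Ψ * Ψᵀ) j j = 1) →
          GammaSum F b Ψ = ∑ i : Fin L, a i * GammaSum (Fs i) (bs i) Ψ) ∧
      (F.nontrivialRootCount = 1 → ∀ i, (Fs i).nontrivialRootCount = 1) := by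
  obtain ⟨L, g, ε, hg, hε, hsum⟩ :=
    AddSubgroup.exists_signed_sum_of_mem_closure hrel.semiSimpleConfig.gammaSumFun_mem_closure
  choose Fs bs hs hroot hg using hg
  refine ⟨L, Fs, bs, fun i => ε i, fun i => by rcases hε i with h | h <;> simp [h], hs,
    fun N Ψ hΨ => ?_, fun h i => hroot i h⟩
  have := congrFun hsum ⟨N, Ψ, hΨ⟩
  simp only [Finset.sum_apply, ← hg, zsmul_eq_mul] at this
  exact this

end
end

section
/- (Lemma: diagonal renormalization of a semi-random matrix). Let M = S Ψ S ∈ ℝ^{N×N} be a semi-random matrix ensemble with constant σψ² = 1. Then there exists a deterministic matrix Ψ̂ such that M̂ := S Ψ̂ S is a semi-random matrix ensemble with constant σψ² = 1 satisfying the exact normalization (Ψ̂Ψ̂ᵀ)_{ii} = 1 for every i ∈ [N], and the operator norm of the difference vanishes: ‖M − M̂‖_op → 0 as N → ∞. -/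
/-!
Divide each row of `Ψ` by its Euclidean length: `Ψ̂ = D^{-1/2} Ψ` with `D = diag(Ψ Ψᵀ)`. Since
`D → I` uniformly, eventually `D ≥ 1/2`, and then the entries of `Ψ̂`, its off-diagonal Gram entries
`(Ψ̂ Ψ̂ᵀ)_{ij} = D_{ii}^{-1/2} (Ψ Ψᵀ)_{ij} D_{jj}^{-1/2}` and its operator norm are bounded by those of
`Ψ` up to constant factors, while `‖Ψ - Ψ̂‖ ≤ ‖I - D^{-1/2}‖ ‖Ψ‖ → 0`; conjugation by a sign matrix
does not increase the operator norm. At the finitely many `N` where this fails, any `Ψ̂` with unit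
rows will do (the identity, if a row of `Ψ` vanishes), as finitely many `N` are absorbed into the
constants.
-/

open MeasureTheory ProbabilityTheory Filter Matrix
open scoped ENNReal NNReal Topology

noncomputable section

/-- The ℓ₂ → ℓ₂ operator norm of a real square matrix. -/
def matOpNorm {N : ℕ} (A : Matrix (Fin N) (Fin N) ℝ) : ℝ :=
  ‖LinearMap.toContinuousLinearMap (Matrix.toEuclideanLin A)‖

/-- Conjugation of a matrix by a diagonal sign matrix: `(S Ψ S)_{ij} = s_i Ψ_{ij} s_j`. -/
def signConj {N : ℕ} (Ψ : Matrix (Fin N) (Fin N) ℝ) (s : Fin N → ℝ) :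
    Matrix (Fin N) (Fin N) ℝ :=
  Matrix.of fun i j => s i * Ψ i j * s j

/-- Conditions (2a)-(2d) of the definition of a semi-random matrix ensemble. -/
structure IsPsiSequence (Ψ : ∀ N : ℕ, Matrix (Fin N) (Fin N) ℝ) (σψsq : ℝ) : Prop where
  pos : 0 < σψsq
  entry : ∀ ε : ℝ, 0 < ε → ∃ C : ℝ, ∀ N : ℕ, ∀ i j : Fin N,
    |Ψ N i j| ≤ C * (N : ℝ) ^ (-(1 / 2 : ℝ) + ε)
  op : ∃ C : ℝ, ∀ N : ℕ, matOpNorm (Ψ N) ≤ C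
  offdiag : ∀ ε : ℝ, 0 < ε → ∃ C : ℝ, ∀ N : ℕ, ∀ i j : Fin N, i ≠ j →
    |(Ψ N * (Ψ N)ᵀ) i j| ≤ C * (N : ℝ) ^ (-(1 / 2 : ℝ) + ε)
  diag : ∀ ε : ℝ, 0 < ε → ∀ᶠ N : ℕ in atTop, ∀ i : Fin N,
    |(Ψ N * (Ψ N)ᵀ) i i - σψsq| ≤ ε

open scoped Matrix.Norms.L2Operator

lemma abs_one_sub_inv_sqrt_le {x δ : ℝ} (hδ : δ ≤ 1 / 2) (hx : |x - 1| ≤ δ) :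
    |1 - (√x)⁻¹| ≤ 2 * δ := by
  obtain ⟨hlo, hhi⟩ := abs_le.mp hx
  have hx0 : 0 ≤ x := by linarith
  have hsq : √x * √x = x := Real.mul_self_sqrt hx0
  have hhalf : 1 / 2 ≤ √x := by nlinarith [Real.sqrt_nonneg x]
  have hdev : |√x - 1| ≤ δ := abs_le.mpr ⟨by nlinarith, by nlinarith⟩
  have hpos : 0 < √x := by linarith
  rw [show 1 - (√x)⁻¹ = (√x - 1) / √x by field_simp, abs_div, abs_of_pos hpos,
    div_le_iff₀ hpos]
  nlinarith [abs_nonneg (√x - 1)]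

lemma abs_inv_sqrt_le_inv_sqrt {x c : ℝ} (hc : 0 < c) (h : c ≤ x) : |(√x)⁻¹| ≤ (√c)⁻¹ := by
  rw [abs_of_nonneg (inv_nonneg.mpr (Real.sqrt_nonneg _))]
  exact inv_anti₀ (Real.sqrt_pos.mpr hc) (Real.sqrt_le_sqrt h)

lemma exists_forall_of_eventually {P : ℕ → ℝ → Prop} (hmono : ∀ N, Monotone (P N))
    (hP : ∀ N, ∃ C, P N C) (hev : ∃ C, ∀ᶠ N in atTop, P N C) : ∃ C, ∀ N, P N C := by
  obtain ⟨C₀, hC₀⟩ := hev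
  obtain ⟨N₀, hN₀⟩ := eventually_atTop.mp hC₀
  choose c hc using hP
  obtain ⟨C, hC⟩ := Finset.exists_le (insert C₀ ((Finset.range N₀).image c))
  refine ⟨C, fun N => ?_⟩
  rcases lt_or_ge N N₀ with hN | hN
  · exact hmono N (hC _ (Finset.mem_insert_of_mem (Finset.mem_image_of_mem c
      (Finset.mem_range.mpr hN)))) (hc N)
  · exact hmono N (hC _ (by simp)) (hN₀ N hN)

namespace Matrix

lemma exists_abs_apply_le_mul_rpow {N : ℕ} (A : Matrix (Fin N) (Fin N) ℝ) (p : ℝ) :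
    ∃ C, ∀ i j, |A i j| ≤ C * (N : ℝ) ^ p := by
  refine ⟨(∑ k, ∑ l, |A k l|) / (N : ℝ) ^ p, fun i j => ?_⟩
  have hpos : 0 < (N : ℝ) ^ p := Real.rpow_pos_of_pos (Nat.cast_pos.mpr i.pos) p
  rw [div_mul_cancel₀ _ hpos.ne']
  calc |A i j| ≤ ∑ l, |A i l| :=
        Finset.single_le_sum (f := fun l => |A i l|) (fun _ _ => abs_nonneg _) (Finset.mem_univ j)
    _ ≤ ∑ k, ∑ l, |A k l| :=
        Finset.single_le_sum (f := fun k => ∑ l, |A k l|)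
          (fun _ _ => Finset.sum_nonneg fun _ _ => abs_nonneg _) (Finset.mem_univ i)

variable {n : Type*} [Fintype n] [DecidableEq n]

lemma l2_opNorm_diagonal_le {d : n → ℝ} {c : ℝ} (hc : 0 ≤ c) (hd : ∀ i, |d i| ≤ c) :
    ‖diagonal d‖ ≤ c := by
  rw [l2_opNorm_diagonal]
  exact (pi_norm_le_iff_of_nonneg hc).mpr hd

lemma l2_opNorm_diagonal_mul_le {d : n → ℝ} {c : ℝ} (hc : 0 ≤ c) (hd : ∀ i, |d i| ≤ c)
    (A : Matrix n n ℝ) : ‖diagonal d * A‖ ≤ c * ‖A‖ :=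
  (l2_opNorm_mul _ _).trans (by gcongr; exact l2_opNorm_diagonal_le hc hd)

def normalizeRows (A : Matrix n n ℝ) : Matrix n n ℝ :=
  open scoped Classical in
  if ∀ i, 0 < (A * Aᵀ) i i then diagonal (fun i => (√((A * Aᵀ) i i))⁻¹) * A else 1

variable {A : Matrix n n ℝ}

lemma normalizeRows_of_forall_pos (h : ∀ i, 0 < (A * Aᵀ) i i) :
    normalizeRows A = diagonal (fun i => (√((A * Aᵀ) i i))⁻¹) * A := by
  rw [normalizeRows, if_pos h]

lemma normalizeRows_mul_transpose_apply (h : ∀ i, 0 < (A * Aᵀ) i i) (i j : n) :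
    (normalizeRows A * (normalizeRows A)ᵀ) i j =
      (√((A * Aᵀ) i i))⁻¹ * (A * Aᵀ) i j * (√((A * Aᵀ) j j))⁻¹ := by
  rw [normalizeRows_of_forall_pos h, transpose_mul, diagonal_transpose, Matrix.mul_assoc,
    ← Matrix.mul_assoc A, ← Matrix.mul_assoc, mul_diagonal, diagonal_mul]

lemma normalizeRows_mul_transpose_apply_self (A : Matrix n n ℝ) (i : n) :
    (normalizeRows A * (normalizeRows A)ᵀ) i i = 1 := by
  by_cases h : ∀ i, 0 < (A * Aᵀ) i i
  · rw [normalizeRows_mul_transpose_apply h, mul_comm, ← mul_assoc, ← mul_inv,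
      Real.mul_self_sqrt (h i).le, inv_mul_cancel₀ (h i).ne']
  · rw [normalizeRows, if_neg h, transpose_one, Matrix.mul_one, one_apply_eq]

lemma abs_normalizeRows_apply_le {c : ℝ} (hc : 0 < c) (hA : ∀ i, c ≤ (A * Aᵀ) i i) (i j : n) :
    |normalizeRows A i j| ≤ (√c)⁻¹ * |A i j| := by
  rw [normalizeRows_of_forall_pos fun i => hc.trans_le (hA i), diagonal_mul, abs_mul]
  gcongr
  exact abs_inv_sqrt_le_inv_sqrt hc (hA i)

lemma abs_normalizeRows_mul_transpose_apply_le {c : ℝ} (hc : 0 < c)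
    (hA : ∀ i, c ≤ (A * Aᵀ) i i) (i j : n) :
    |(normalizeRows A * (normalizeRows A)ᵀ) i j| ≤ c⁻¹ * |(A * Aᵀ) i j| := by
  have hi := abs_inv_sqrt_le_inv_sqrt hc (hA i)
  have hj := abs_inv_sqrt_le_inv_sqrt hc (hA j)
  rw [normalizeRows_mul_transpose_apply fun i => hc.trans_le (hA i), abs_mul, abs_mul]
  calc _ ≤ (√c)⁻¹ * |(A * Aᵀ) i j| * (√c)⁻¹ := by gcongr
    _ = c⁻¹ * |(A * Aᵀ) i j| := by
      rw [mul_right_comm, ← mul_inv, Real.mul_self_sqrt hc.le]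

lemma l2_opNorm_normalizeRows_le {c : ℝ} (hc : 0 < c) (hA : ∀ i, c ≤ (A * Aᵀ) i i) :
    ‖normalizeRows A‖ ≤ (√c)⁻¹ * ‖A‖ := by
  rw [normalizeRows_of_forall_pos fun i => hc.trans_le (hA i)]
  exact l2_opNorm_diagonal_mul_le (by positivity)
    (fun i => abs_inv_sqrt_le_inv_sqrt hc (hA i)) A

lemma l2_opNorm_sub_normalizeRows_le {δ : ℝ} (hδ0 : 0 ≤ δ) (hδ : δ ≤ 1 / 2)
    (hA : ∀ i, |(A * Aᵀ) i i - 1| ≤ δ) : ‖A - normalizeRows A‖ ≤ 2 * δ * ‖A‖ := by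
  have hpos : ∀ i, 0 < (A * Aᵀ) i i := fun i => by linarith [(abs_le.mp (hA i)).1]
  have hsub : A - normalizeRows A = diagonal (fun i => 1 - (√((A * Aᵀ) i i))⁻¹) * A := by
    rw [normalizeRows_of_forall_pos hpos]
    ext i j
    simp only [sub_apply, diagonal_mul]
    ring
  rw [hsub]
  exact l2_opNorm_diagonal_mul_le (by positivity)
    (fun i => abs_one_sub_inv_sqrt_le hδ (hA i)) A

end Matrix

lemma matOpNorm_eq_l2_opNorm {N : ℕ} (A : Matrix (Fin N) (Fin N) ℝ) : matOpNorm A = ‖A‖ := rfl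

lemma signConj_eq_diagonal_mul_mul_diagonal {N : ℕ} (A : Matrix (Fin N) (Fin N) ℝ)
    (s : Fin N → ℝ) : signConj A s = diagonal s * A * diagonal s := by
  ext i j
  rw [mul_diagonal, diagonal_mul]
  rfl

lemma signConj_sub_signConj {N : ℕ} (A B : Matrix (Fin N) (Fin N) ℝ) (s : Fin N → ℝ) :
    signConj A s - signConj B s = signConj (A - B) s := by
  simp only [signConj_eq_diagonal_mul_mul_diagonal, Matrix.mul_sub, Matrix.sub_mul]

lemma matOpNorm_signConj_le {N : ℕ} (A : Matrix (Fin N) (Fin N) ℝ) {s : Fin N → ℝ}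
    (hs : ∀ i, |s i| ≤ 1) : matOpNorm (signConj A s) ≤ matOpNorm A := by
  rw [matOpNorm_eq_l2_opNorm, matOpNorm_eq_l2_opNorm, signConj_eq_diagonal_mul_mul_diagonal]
  have hS : ‖(diagonal s : Matrix (Fin N) (Fin N) ℝ)‖ ≤ 1 := l2_opNorm_diagonal_le zero_le_one hs
  calc ‖diagonal s * A * diagonal s‖ ≤ ‖diagonal s‖ * ‖A‖ * ‖diagonal s‖ :=
        (l2_opNorm_mul _ _).trans (by gcongr; exact l2_opNorm_mul _ _)
    _ ≤ 1 * ‖A‖ * 1 := by gcongr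
    _ = ‖A‖ := by ring

namespace IsPsiSequence

variable {Ψ : ∀ N : ℕ, Matrix (Fin N) (Fin N) ℝ} {σ : ℝ}

lemma eventually_half_le_diag (hΨ : IsPsiSequence Ψ σ) :
    ∀ᶠ N in atTop, ∀ i, σ / 2 ≤ (Ψ N * (Ψ N)ᵀ) i i := by
  filter_upwards [hΨ.diag (σ / 2) (half_pos hΨ.pos)] with N hN i
  linarith [(abs_le.mp (hN i)).1]

lemma tendsto_diag_sub (hΨ : IsPsiSequence Ψ σ) :
    Tendsto (fun N => ‖fun i => (Ψ N * (Ψ N)ᵀ) i i - σ‖) atTop (𝓝 0) := by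
  refine Metric.tendsto_nhds.mpr fun ε hε => ?_
  filter_upwards [hΨ.diag (ε / 2) (half_pos hε)] with N hN
  rw [Real.dist_0_eq_abs, abs_norm]
  exact ((pi_norm_le_iff_of_nonneg (half_pos hε).le).mpr hN).trans_lt (half_lt_self hε)

theorem normalizeRows (hΨ : IsPsiSequence Ψ σ) :
    IsPsiSequence (fun N => (Ψ N).normalizeRows) 1 := by
  have hc : 0 < σ / 2 := half_pos hΨ.pos
  have hlow := hΨ.eventually_half_le_diag
  refine ⟨one_pos, fun ε hε => ?_, ?_, fun ε hε => ?_, fun ε hε => ?_⟩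
  · obtain ⟨C, hC⟩ := hΨ.entry ε hε
    refine exists_forall_of_eventually (fun N C C' hCC' h i j => (h i j).trans (by gcongr))
      (fun N => exists_abs_apply_le_mul_rpow _ _) ⟨(√(σ / 2))⁻¹ * C, ?_⟩
    filter_upwards [hlow] with N hN i j
    calc _ ≤ (√(σ / 2))⁻¹ * |Ψ N i j| := abs_normalizeRows_apply_le hc hN i j
      _ ≤ _ := by rw [mul_assoc]; gcongr; exact hC N i j
  · obtain ⟨B, hB⟩ := hΨ.op
    refine exists_forall_of_eventually (fun N C C' hCC' h => h.trans hCC') (fun N => ⟨_, le_rfl⟩)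
      ⟨(√(σ / 2))⁻¹ * B, ?_⟩
    filter_upwards [hlow] with N hN
    exact (l2_opNorm_normalizeRows_le hc hN).trans (by gcongr; exact hB N)
  · obtain ⟨C, hC⟩ := hΨ.offdiag ε hε
    refine exists_forall_of_eventually (fun N C C' hCC' h i j hij => (h i j hij).trans (by gcongr))
      (fun N => (exists_abs_apply_le_mul_rpow _ _).imp fun C h i j _ => h i j)
      ⟨(σ / 2)⁻¹ * C, ?_⟩
    filter_upwards [hlow] with N hN i j hij
    calc _ ≤ (σ / 2)⁻¹ * |(Ψ N * (Ψ N)ᵀ) i j| := abs_normalizeRows_mul_transpose_apply_le hc hN i j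
      _ ≤ _ := by rw [mul_assoc]; gcongr; exact hC N i j hij
  · exact Eventually.of_forall fun N i => by
      simpa [normalizeRows_mul_transpose_apply_self] using hε.le

theorem tendsto_l2_opNorm_sub_normalizeRows (hΨ : IsPsiSequence Ψ 1) :
    Tendsto (fun N => ‖Ψ N - (Ψ N).normalizeRows‖) atTop (𝓝 0) := by
  obtain ⟨B, hB⟩ := hΨ.op
  have hdev := hΨ.tendsto_diag_sub
  have hbound : ∀ᶠ N in atTop, ‖Ψ N - (Ψ N).normalizeRows‖ ≤
      2 * ‖fun i => (Ψ N * (Ψ N)ᵀ) i i - 1‖ * B := by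
    filter_upwards [(tendsto_order.mp hdev).2 (1 / 2) one_half_pos] with N hN
    exact (l2_opNorm_sub_normalizeRows_le (norm_nonneg _) hN.le fun i => norm_le_pi_norm
      (fun i => (Ψ N * (Ψ N)ᵀ) i i - 1) i).trans (by gcongr; exact hB N)
  exact squeeze_zero' (Eventually.of_forall fun N => norm_nonneg _) hbound
    (by simpa using (hdev.const_mul 2).mul_const B)

end IsPsiSequence

/-- **Lemma (diagonal renormalization of a semi-random matrix).**
Given a semi-random ensemble `M = S Ψ S` with `σψ² = 1`, there is a deterministic
sequence `Ψ̂` such that `M̂ = S Ψ̂ S` is semi-random with `σψ² = 1`,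
`(Ψ̂ Ψ̂ᵀ)_{ii} = 1` exactly for every `i`, and `‖M − M̂‖_op → 0`. -/
theorem diagonal_renormalization
    (Ψ : ∀ N : ℕ, Matrix (Fin N) (Fin N) ℝ) (hΨ : IsPsiSequence Ψ 1) :
    ∃ Ψh : ∀ N : ℕ, Matrix (Fin N) (Fin N) ℝ,
      IsPsiSequence Ψh 1 ∧
      (∀ N : ℕ, ∀ i : Fin N, (Ψh N * (Ψh N)ᵀ) i i = 1) ∧
      ∀ s : ∀ N : ℕ, Fin N → ℝ, (∀ N i, s N i = 1 ∨ s N i = -1) →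
        Tendsto (fun N => matOpNorm (signConj (Ψ N) (s N) - signConj (Ψh N) (s N)))
          atTop (nhds 0) := by
  refine ⟨fun N => (Ψ N).normalizeRows, hΨ.normalizeRows,
    fun N => normalizeRows_mul_transpose_apply_self (Ψ N), fun s hs => ?_⟩
  have hs_abs : ∀ N i, |s N i| ≤ 1 := fun N i => by rcases hs N i with h | h <;> simp [h]
  refine squeeze_zero (fun N => norm_nonneg _) (fun N => ?_)
    hΨ.tendsto_l2_opNorm_sub_normalizeRows
  rw [signConj_sub_signConj]
  exact matOpNorm_signConj_le _ (hs_abs N)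
end
end
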